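/- arXiv:2412.03464 — 4 statements merged into one kernel-verified Lean document; each statement's English description precedes it below -/
import Mathlib

section
/- Let $(\mathcal{F}_n)_{n\ge 0}$ be a filtration on a probability space and let $(\xi_n)_{n\ge 1}$ be an adapted sequence of random variables taking values in $\{0,1\}$, with $\xi_n$ being $\mathcal{F}_n$-measurable, and set $\theta_n := \mathbb{P}(\xi_n = 1 \mid \mathcal{F}_{n-1})$. Then for any $\delta > 0$, any positive integer $N$, and any constant $\mu > 0$ such that $\sum_{i=1}^N \theta_i \le \mu$ almost surely, $\mathbb{P}\left(\sum_{i=1}^N \xi_i \ge (1+\delta)\mu\right) \le \left(\frac{e^{\delta}}{(1+\delta)^{1+\delta}}\right)^{\mu} \le \exp\left(-\frac{\delta^2}{2+\delta}\mu\right)$ (the martingale multiplicative Chernoff bound). -/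
/-!
Put `t = log (1 + δ)` and `θ i = 𝔼[ξ i | ℱ (i - 1)]`. As `ξ i ∈ {0, 1}`, `exp (t ξ i) = 1 + δ ξ i`,
whose conditional expectation `1 + δ θ i` is at most `exp (δ θ i)`; hence
`exp (t ∑ ξ i - δ ∑ θ i)` is a supermartingale of expectation at most `1`. On the event
`∑ ξ i ≥ (1 + δ) μ₀`, where also `∑ θ i ≤ μ₀`, it is at least `exp (((1 + δ) t - δ) μ₀)`, and
Markov's inequality gives the first bound. The second is `log (1 + δ) ≥ 2 δ / (2 + δ)`.
-/

open MeasureTheory ProbabilityTheory Finset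
open Real

lemma exp_mul_eq_one_add_mul_of_eq_zero_or_eq_one {t δ x : ℝ} (het : exp t = 1 + δ)
    (hx : x = 0 ∨ x = 1) : exp (t * x) = 1 + δ * x := by
  rcases hx with rfl | rfl <;> simp [het]

lemma one_add_mul_exp_neg_le_one (y : ℝ) : (1 + y) * exp (-y) ≤ 1 :=
  calc (1 + y) * exp (-y) ≤ exp y * exp (-y) := by
        gcongr
        linarith [add_one_le_exp y]
    _ = 1 := by rw [← exp_add, add_neg_cancel, exp_zero]

lemma integral_mul_condExp_of_stronglyMeasurable_left {Ω : Type*} {m m0 : MeasurableSpace Ω}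
    {μ : Measure Ω} (hm : m ≤ m0) [SigmaFinite (μ.trim hm)] {g f : Ω → ℝ}
    (hg : StronglyMeasurable[m] g) (hgf : Integrable (g * f) μ) (hf : Integrable f μ) :
    ∫ ω, g ω * μ[f|m] ω ∂μ = ∫ ω, g ω * f ω ∂μ :=
  (integral_congr_ae (condExp_mul_of_stronglyMeasurable_left hg hgf hf)).symm.trans
    (integral_condExp hm)

lemma integral_mul_exp_sub_condExp_le {Ω : Type*} {m m0 : MeasurableSpace Ω} {μ : Measure Ω}
    [IsFiniteMeasure μ] (hm : m ≤ m0) {g ξ : Ω → ℝ} {t δ : ℝ} (hδ : 0 ≤ δ)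
    (het : exp t = 1 + δ) (hg : StronglyMeasurable[m] g) (hg_int : Integrable g μ)
    (hg_nonneg : 0 ≤ᵐ[μ] g) (hξ_meas : AEStronglyMeasurable ξ μ)
    (hξ : ∀ ω, ξ ω = 0 ∨ ξ ω = 1) :
    Integrable (fun ω => g ω * exp (t * ξ ω - δ * μ[ξ|m] ω)) μ ∧
      ∫ ω, g ω * exp (t * ξ ω - δ * μ[ξ|m] ω) ∂μ ≤ ∫ ω, g ω ∂μ := by
  set θ := μ[ξ|m]
  have hξ_bound : ∀ ω, ‖ξ ω‖ ≤ 1 := fun ω => by rcases hξ ω with h | h <;> simp [h]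
  have hξ_int : Integrable ξ μ := .of_bound hξ_meas 1 (ae_of_all _ hξ_bound)
  have hθ_nonneg : 0 ≤ᵐ[μ] θ :=
    condExp_nonneg (ae_of_all _ fun ω => by rcases hξ ω with h | h <;> simp [h])
  have hdiscount_meas : StronglyMeasurable[m] fun ω => exp (-(δ * θ ω)) :=
    continuous_exp.comp_stronglyMeasurable (stronglyMeasurable_condExp.const_mul δ).neg
  set h := fun ω => g ω * exp (-(δ * θ ω))
  have h_meas : StronglyMeasurable[m] h := hg.mul hdiscount_meas
  have h_int : Integrable h μ := by
    refine hg_int.mul_bdd (c := 1) (hdiscount_meas.mono hm).aestronglyMeasurable ?_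
    filter_upwards [hθ_nonneg] with ω hω
    rw [norm_of_nonneg (exp_pos _).le, exp_le_one_iff, neg_nonpos]
    exact mul_nonneg hδ hω
  have hhξ_int : Integrable (fun ω => h ω * ξ ω) μ := h_int.mul_bdd hξ_meas (ae_of_all _ hξ_bound)
  have hhθ_int : Integrable (fun ω => h ω * θ ω) μ :=
    integrable_condExp.congr (condExp_mul_of_stronglyMeasurable_left h_meas hhξ_int hξ_int)
  have h_split : (fun ω => g ω * exp (t * ξ ω - δ * θ ω)) = fun ω => h ω + δ * (h ω * ξ ω) := by
    ext ω
    rw [sub_eq_add_neg, exp_add, exp_mul_eq_one_add_mul_of_eq_zero_or_eq_one het (hξ ω)]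
    ring
  rw [h_split]
  refine ⟨h_int.add (hhξ_int.const_mul δ), ?_⟩
  calc ∫ ω, h ω + δ * (h ω * ξ ω) ∂μ = ∫ ω, h ω ∂μ + δ * ∫ ω, h ω * ξ ω ∂μ := by
        rw [integral_add h_int (hhξ_int.const_mul δ), integral_const_mul]
    _ = ∫ ω, h ω + δ * (h ω * θ ω) ∂μ := by
        rw [integral_add h_int (hhθ_int.const_mul δ), integral_const_mul,
          integral_mul_condExp_of_stronglyMeasurable_left hm h_meas hhξ_int hξ_int]
    _ ≤ ∫ ω, g ω ∂μ := by
        refine integral_mono_ae (h_int.add (hhθ_int.const_mul δ)) hg_int ?_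
        filter_upwards [hg_nonneg] with ω hω
        calc h ω + δ * (h ω * θ ω) = g ω * ((1 + δ * θ ω) * exp (-(δ * θ ω))) := by ring
          _ ≤ g ω * 1 := by gcongr; exact one_add_mul_exp_neg_le_one _
          _ = g ω := mul_one _

section ChernoffProcess

variable {Ω : Type*} {m0 : MeasurableSpace Ω} {μ : Measure Ω} {ℱ : Filtration ℕ m0}
  {ξ : ℕ → Ω → ℝ} {t δ : ℝ}

noncomputable def chernoffProcess (μ : Measure Ω) (ℱ : Filtration ℕ m0) (ξ : ℕ → Ω → ℝ)
    (t δ : ℝ) (n : ℕ) (ω : Ω) : ℝ :=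
  exp (t * ∑ i ∈ Icc 1 n, ξ i ω - δ * ∑ i ∈ Icc 1 n, μ[ξ i|ℱ (i - 1)] ω)

lemma chernoffProcess_succ (n : ℕ) (ω : Ω) :
    chernoffProcess μ ℱ ξ t δ (n + 1) ω =
      chernoffProcess μ ℱ ξ t δ n ω * exp (t * ξ (n + 1) ω - δ * μ[ξ (n + 1)|ℱ n] ω) := by
  rw [chernoffProcess, chernoffProcess, sum_Icc_succ_top (Nat.le_add_left 1 n),
    sum_Icc_succ_top (Nat.le_add_left 1 n), Nat.add_sub_cancel, ← exp_add]
  ring_nf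

lemma stronglyMeasurable_chernoffProcess
    (hadapt : ∀ n, 1 ≤ n → StronglyMeasurable[ℱ n] (ξ n)) (n : ℕ) :
    StronglyMeasurable[ℱ n] (chernoffProcess μ ℱ ξ t δ n) := by
  have hξ : ∀ i ∈ Icc 1 n, StronglyMeasurable[ℱ n] (ξ i) := fun i hi =>
    (hadapt i (mem_Icc.1 hi).1).mono (ℱ.mono (mem_Icc.1 hi).2)
  have hθ : ∀ i ∈ Icc 1 n, StronglyMeasurable[ℱ n] (μ[ξ i|ℱ (i - 1)]) := fun i hi =>
    stronglyMeasurable_condExp.mono (ℱ.mono ((Nat.sub_le i 1).trans (mem_Icc.1 hi).2))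
  exact continuous_exp.comp_stronglyMeasurable
    (((stronglyMeasurable_fun_sum _ hξ).const_mul t).sub
      ((stronglyMeasurable_fun_sum _ hθ).const_mul δ))

lemma integrable_chernoffProcess_and_integral_le_one [IsProbabilityMeasure μ]
    (hadapt : ∀ n, 1 ≤ n → StronglyMeasurable[ℱ n] (ξ n))
    (hval : ∀ n, 1 ≤ n → ∀ ω, ξ n ω = 0 ∨ ξ n ω = 1) (hδ : 0 ≤ δ) (het : exp t = 1 + δ)
    (n : ℕ) :
    Integrable (chernoffProcess μ ℱ ξ t δ n) μ ∧ ∫ ω, chernoffProcess μ ℱ ξ t δ n ω ∂μ ≤ 1 := by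
  induction n with
  | zero =>
    have h_zero : chernoffProcess μ ℱ ξ t δ 0 = 1 := by ext; simp [chernoffProcess]
    rw [h_zero]
    exact ⟨integrable_const 1, by simp⟩
  | succ n ih =>
    rw [funext (chernoffProcess_succ n)]
    obtain ⟨h_int, h_le⟩ := integral_mul_exp_sub_condExp_le (ℱ.le n) hδ het
      (stronglyMeasurable_chernoffProcess hadapt n) ih.1
      (ae_of_all _ fun ω => (exp_pos _).le)
      ((hadapt (n + 1) n.succ_pos).mono (ℱ.le _)).aestronglyMeasurable
      (hval (n + 1) n.succ_pos)
    exact ⟨h_int, h_le.trans ih.2⟩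

lemma measureReal_sum_ge_le_exp [IsProbabilityMeasure μ]
    (hadapt : ∀ n, 1 ≤ n → StronglyMeasurable[ℱ n] (ξ n))
    (hval : ∀ n, 1 ≤ n → ∀ ω, ξ n ω = 0 ∨ ξ n ω = 1) (hδ : 0 ≤ δ) {N : ℕ} {μ₀ : ℝ}
    (hbound : ∀ᵐ ω ∂μ, ∑ i ∈ Icc 1 N, μ[ξ i|ℱ (i - 1)] ω ≤ μ₀) :
    μ.real {ω | (1 + δ) * μ₀ ≤ ∑ i ∈ Icc 1 N, ξ i ω} ≤
      exp ((δ - (1 + δ) * log (1 + δ)) * μ₀) := by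
  set t := log (1 + δ)
  have het : exp t = 1 + δ := exp_log (by linarith)
  have ht : 0 ≤ t := log_nonneg (by linarith)
  obtain ⟨h_int, h_le⟩ :=
    integrable_chernoffProcess_and_integral_le_one (μ := μ) (ℱ := ℱ) hadapt hval hδ het N
  set c := ((1 + δ) * t - δ) * μ₀
  have h_event : {ω | (1 + δ) * μ₀ ≤ ∑ i ∈ Icc 1 N, ξ i ω} ≤ᵐ[μ]
      {ω | exp c ≤ chernoffProcess μ ℱ ξ t δ N ω} := by
    filter_upwards [hbound] with ω hθ hξ
    refine exp_le_exp.2 ?_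
    nlinarith [mul_le_mul_of_nonneg_left (hξ : (1 + δ) * μ₀ ≤ _) ht,
      mul_le_mul_of_nonneg_left hθ hδ]
  have h_markov : exp c * μ.real {ω | exp c ≤ chernoffProcess μ ℱ ξ t δ N ω} ≤
      ∫ ω, chernoffProcess μ ℱ ξ t δ N ω ∂μ :=
    mul_meas_ge_le_integral_of_nonneg (ae_of_all _ fun ω => (exp_pos _).le) h_int _
  calc μ.real {ω | (1 + δ) * μ₀ ≤ ∑ i ∈ Icc 1 N, ξ i ω}
      ≤ μ.real {ω | exp c ≤ chernoffProcess μ ℱ ξ t δ N ω} :=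
        ENNReal.toReal_mono (measure_ne_top _ _) (measure_mono_ae h_event)
    _ ≤ exp (-c) := by
        rw [exp_neg, ← one_div, le_div_iff₀ (exp_pos c)]
        linarith [mul_comm (exp c) (μ.real {ω | exp c ≤ chernoffProcess μ ℱ ξ t δ N ω})]
    _ = exp ((δ - (1 + δ) * t) * μ₀) := by
        congr 1
        simp only [c]
        ring

end ChernoffProcess

lemma rpow_exp_div_one_add_rpow {δ : ℝ} (hδ : 0 < 1 + δ) (x : ℝ) :
    (exp δ / (1 + δ) ^ (1 + δ)) ^ x = exp ((δ - (1 + δ) * log (1 + δ)) * x) := by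
  rw [rpow_def_of_pos (div_pos (exp_pos δ) (rpow_pos_of_pos hδ _)),
    log_div (exp_ne_zero δ) (rpow_pos_of_pos hδ _).ne', log_exp, log_rpow hδ]

lemma sub_one_add_mul_log_one_add_le {δ : ℝ} (hδ : 0 ≤ δ) :
    δ - (1 + δ) * log (1 + δ) ≤ -(δ ^ 2 / (2 + δ)) := by
  have h_mul : (1 + δ) * (2 * δ / (δ + 2)) = δ + δ ^ 2 / (2 + δ) := by
    field_simp
    ring
  nlinarith [mul_le_mul_of_nonneg_left (le_log_one_add_of_nonneg hδ) (by linarith : 0 ≤ 1 + δ)]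

theorem statement1_general {Ω : Type*} {m0 : MeasurableSpace Ω} {μ : Measure Ω}
    [IsProbabilityMeasure μ] (ℱ : Filtration ℕ m0)
    (ξ θ : ℕ → Ω → ℝ)
    (hadapt : ∀ n, 1 ≤ n → StronglyMeasurable[ℱ n] (ξ n))
    (hval : ∀ n, 1 ≤ n → ∀ ω, ξ n ω = 0 ∨ ξ n ω = 1)
    (hθ : ∀ n, 1 ≤ n → θ n = μ[ξ n|ℱ (n - 1)])
    (δ : ℝ) (hδ : 0 < δ) (N : ℕ) (μ₀ : ℝ) (hμ₀ : 0 < μ₀)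
    (hbound : ∀ᵐ ω ∂μ, ∑ i ∈ Finset.Icc 1 N, θ i ω ≤ μ₀) :
    (μ {ω | (1 + δ) * μ₀ ≤ ∑ i ∈ Finset.Icc 1 N, ξ i ω}).toReal
        ≤ (Real.exp δ / (1 + δ) ^ (1 + δ)) ^ μ₀ ∧
    (Real.exp δ / (1 + δ) ^ (1 + δ)) ^ μ₀ ≤ Real.exp (-(δ ^ 2 / (2 + δ)) * μ₀) := by
  have hbound_condExp : ∀ᵐ ω ∂μ, ∑ i ∈ Icc 1 N, μ[ξ i|ℱ (i - 1)] ω ≤ μ₀ := by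
    filter_upwards [hbound] with ω hω
    rwa [sum_congr rfl fun i hi => congrFun (hθ i (mem_Icc.1 hi).1) ω] at hω
  rw [rpow_exp_div_one_add_rpow (by linarith)]
  exact ⟨measureReal_sum_ge_le_exp hadapt hval hδ.le hbound_condExp,
    exp_le_exp.2 (mul_le_mul_of_nonneg_right (sub_one_add_mul_log_one_add_le hδ.le) hμ₀.le)⟩

/-- martingale multiplicative Chernoff bound: For a filtration `ℱ`, an adapted
`{0,1}`-valued sequence `ξ` (indexed from 1), and `θ n` the conditional expectation of `ξ n`
given `ℱ (n-1)` (which equals `P(ξ n = 1 ∣ ℱ (n-1))`), if `δ > 0`, `N ≥ 1`, `μ₀ > 0` and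
`∑_{i=1}^N θ i ≤ μ₀` a.s., then
`P(∑_{i=1}^N ξ i ≥ (1+δ) μ₀) ≤ (e^δ/(1+δ)^(1+δ))^μ₀ ≤ exp(-(δ²/(2+δ)) μ₀)`. -/
theorem statement1 {Ω : Type*} {m0 : MeasurableSpace Ω} {μ : Measure Ω}
    [IsProbabilityMeasure μ] (ℱ : Filtration ℕ m0)
    (ξ θ : ℕ → Ω → ℝ)
    (hadapt : ∀ n, 1 ≤ n → StronglyMeasurable[ℱ n] (ξ n))
    (hval : ∀ n, 1 ≤ n → ∀ ω, ξ n ω = 0 ∨ ξ n ω = 1)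
    (hθ : ∀ n, 1 ≤ n → θ n = μ[ξ n|ℱ (n - 1)])
    (δ : ℝ) (hδ : 0 < δ) (N : ℕ) (hN : 1 ≤ N) (μ₀ : ℝ) (hμ₀ : 0 < μ₀)
    (hbound : ∀ᵐ ω ∂μ, ∑ i ∈ Finset.Icc 1 N, θ i ω ≤ μ₀) :
    (μ {ω | (1 + δ) * μ₀ ≤ ∑ i ∈ Finset.Icc 1 N, ξ i ω}).toReal
        ≤ (Real.exp δ / (1 + δ) ^ (1 + δ)) ^ μ₀ ∧
    (Real.exp δ / (1 + δ) ^ (1 + δ)) ^ μ₀ ≤ Real.exp (-(δ ^ 2 / (2 + δ)) * μ₀) :=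
  statement1_general ℱ ξ θ hadapt hval hθ δ hδ N μ₀ hμ₀ hbound
end

section
/- Let $(\mathcal{F}_n)_{n\ge 0}$ be a filtration on a probability space and let $(\xi_n)_{n\ge 1}$ be an adapted sequence of random variables taking values in $\{0,1\}$, with $\xi_n$ being $\mathcal{F}_n$-measurable, and set $\theta_n := \mathbb{P}(\xi_n = 1 \mid \mathcal{F}_{n-1})$. Then for any $\delta > 0$, any positive integer $N$, and any constant $\mu > 0$ such that $\sum_{i=1}^N \theta_i \le \mu$ almost surely, the maximal inequality $\mathbb{P}\left(\exists n \in \{1,\dots,N\}: \sum_{i=1}^n \xi_i \ge (1+\delta)\mu\right) \le \exp\left(-\frac{\delta^2}{2+\delta}\mu\right)$ holds (since the $\xi_i$ are nonnegative, the event $\exists n \le N: \sum_{i=1}^n \xi_i \ge (1+\delta)\mu$ coincides with $\sum_{i=1}^N \xi_i \ge (1+\delta)\mu$). -/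
/-!
With `θᵢ = 𝔼[ξᵢ | ℱᵢ₋₁]`, `Sₙ = ∑_{i ≤ n} ξᵢ` and `Aₙ = ∑_{i ≤ n} θᵢ`, the process
`exp (t Sₙ - (eᵗ - 1) Aₙ)` has expectation at most `1` for every `t ≥ 0`: by convexity
`e^{t ξ} ≤ 1 + (eᵗ - 1) ξ`, whose conditional expectation is `1 + (eᵗ - 1) θ ≤ e^{(eᵗ - 1) θ}`.
Markov's inequality at `t = log (1 + δ)` bounds `P(S_N ≥ (1 + δ) μ₀)` by
`exp (-((1 + δ) log (1 + δ) - δ) μ₀)`, and `(1 + δ) log (1 + δ) - δ ≥ δ² / (2 + δ)` follows from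
`log (1 + δ) ≥ 2δ / (2 + δ)`.
-/

open MeasureTheory ProbabilityTheory Finset Real

lemma exp_mul_le_one_add_mul {x : ℝ} (hx : x ∈ Set.Icc (0 : ℝ) 1) (t : ℝ) :
    exp (t * x) ≤ 1 + (exp t - 1) * x := by
  have h := convexOn_exp.2 (Set.mem_univ 0) (Set.mem_univ t) (sub_nonneg.2 hx.2) hx.1
    (by ring)
  simp only [smul_eq_mul, mul_zero, zero_add, exp_zero, mul_one] at h
  rw [mul_comm]
  linarith

lemma sq_div_two_add_le_one_add_mul_log_one_add_sub {δ : ℝ} (hδ : 0 ≤ δ) :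
    δ ^ 2 / (2 + δ) ≤ (1 + δ) * log (1 + δ) - δ := by
  have hlog := le_log_one_add_of_nonneg hδ
  have hpos : 0 < δ + 2 := by linarith
  have key : δ ^ 2 / (2 + δ) = (1 + δ) * (2 * δ / (δ + 2)) - δ := by
    field_simp
    ring
  rw [key]
  gcongr

lemma integral_mul_exp_le_integral_mul_exp_condExp {Ω : Type*} {m m0 : MeasurableSpace Ω}
    {μ : Measure Ω} [IsFiniteMeasure μ] (hm : m ≤ m0) {f X : Ω → ℝ}
    (hf : StronglyMeasurable[m] f) (hf0 : 0 ≤ᵐ[μ] f) (hf_int : Integrable f μ)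
    (hX : AEStronglyMeasurable X μ) (hX01 : ∀ᵐ ω ∂μ, X ω ∈ Set.Icc (0 : ℝ) 1) (t : ℝ)
    (h_int : Integrable (fun ω => f ω * exp ((exp t - 1) * μ[X|m] ω)) μ) :
    ∫ ω, f ω * exp (t * X ω) ∂μ ≤ ∫ ω, f ω * exp ((exp t - 1) * μ[X|m] ω) ∂μ := by
  have hX_bdd : ∀ᵐ ω ∂μ, ‖X ω‖ ≤ 1 := by
    filter_upwards [hX01] with ω hω
    rw [norm_eq_abs, abs_le]
    constructor <;> linarith [hω.1, hω.2]
  have hX_int : Integrable X μ := .of_bound hX 1 hX_bdd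
  have hfX_int : Integrable (f * X) μ := hf_int.mul_bdd hX hX_bdd
  have h_pull : f * μ[X|m] =ᵐ[μ] μ[f * X|m] :=
    (condExp_mul_of_stronglyMeasurable_left hf hfX_int hX_int).symm
  have hfθ_int : Integrable (f * μ[X|m]) μ := integrable_condExp.congr h_pull.symm
  have hfexp_int : Integrable (fun ω => f ω * exp (t * X ω)) μ := by
    refine hf_int.mul_bdd (continuous_exp.comp_aestronglyMeasurable (hX.const_mul t))
      (c := exp |t|) ?_
    filter_upwards [hX_bdd] with ω hω
    rw [norm_of_nonneg (exp_pos _).le, exp_le_exp]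
    calc t * X ω ≤ |t * X ω| := le_abs_self _
      _ ≤ |t| := by
        rw [abs_mul]
        exact mul_le_of_le_one_right (abs_nonneg t) (by rwa [← norm_eq_abs])
  calc ∫ ω, f ω * exp (t * X ω) ∂μ
      ≤ ∫ ω, f ω + (exp t - 1) * (f * X) ω ∂μ := by
        refine integral_mono_ae hfexp_int (hf_int.add (hfX_int.const_mul _)) ?_
        filter_upwards [hf0, hX01] with ω hfω hω
        have := mul_le_mul_of_nonneg_left (exp_mul_le_one_add_mul hω t) hfω
        simp only [Pi.mul_apply] at this ⊢
        linarith
    _ = ∫ ω, f ω + (exp t - 1) * (f * μ[X|m]) ω ∂μ := by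
        rw [integral_add hf_int (hfX_int.const_mul _), integral_add hf_int (hfθ_int.const_mul _),
          integral_const_mul, integral_const_mul, integral_congr_ae h_pull,
          integral_condExp hm]
    _ ≤ ∫ ω, f ω * exp ((exp t - 1) * μ[X|m] ω) ∂μ := by
        refine integral_mono_ae (hf_int.add (hfθ_int.const_mul _)) h_int ?_
        filter_upwards [hf0] with ω hfω
        have := mul_le_mul_of_nonneg_left (add_one_le_exp ((exp t - 1) * μ[X|m] ω)) hfω
        simp only [Pi.mul_apply] at this ⊢
        linarith

section ExponentialSupermartingale

variable {Ω : Type*} {m0 : MeasurableSpace Ω} {μ : Measure Ω} [IsProbabilityMeasure μ]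
  {ℱ : Filtration ℕ m0} {ξ : ℕ → Ω → ℝ}

lemma integrable_exp_sum_sub_sum_condExp
    (hadapt : ∀ n, 1 ≤ n → StronglyMeasurable[ℱ n] (ξ n))
    (hξ : ∀ n, 1 ≤ n → ∀ ω, ξ n ω ∈ Set.Icc (0 : ℝ) 1) {t c : ℝ} (ht : 0 ≤ t) (hc : 0 ≤ c)
    (n k : ℕ) :
    Integrable (fun ω => exp (t * ∑ i ∈ Icc 1 n, ξ i ω
      - c * ∑ i ∈ Icc 1 k, μ[ξ i|ℱ (i - 1)] ω)) μ := by
  have hS_meas : StronglyMeasurable (fun ω => ∑ i ∈ Icc 1 n, ξ i ω) :=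
    Finset.stronglyMeasurable_fun_sum _ fun i hi =>
      (hadapt i (mem_Icc.1 hi).1).mono (ℱ.le i)
  have hA_meas : StronglyMeasurable (fun ω => ∑ i ∈ Icc 1 k, μ[ξ i|ℱ (i - 1)] ω) :=
    Finset.stronglyMeasurable_fun_sum _ fun i _ => stronglyMeasurable_condExp.mono (ℱ.le _)
  refine .of_bound (continuous_exp.comp_stronglyMeasurable
    ((hS_meas.const_mul t).sub (hA_meas.const_mul c))).aestronglyMeasurable (exp (t * n)) ?_
  have hθ0 : ∀ᵐ ω ∂μ, ∀ i ∈ Icc 1 k, 0 ≤ μ[ξ i|ℱ (i - 1)] ω := by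
    refine ae_all_iff.2 fun i => ?_
    by_cases hi : 1 ≤ i
    · filter_upwards [condExp_nonneg (m := ℱ (i - 1)) (μ := μ)
        (.of_forall fun ω => (hξ i hi ω).1)] with ω hω _ using hω
    · exact .of_forall fun ω h => absurd (mem_Icc.1 h).1 hi
  filter_upwards [hθ0] with ω hω
  have hS : ∑ i ∈ Icc 1 n, ξ i ω ≤ n := by
    simpa using Finset.sum_le_card_nsmul _ _ 1 fun i hi => (hξ i (mem_Icc.1 hi).1 ω).2
  have hA : 0 ≤ c * ∑ i ∈ Icc 1 k, μ[ξ i|ℱ (i - 1)] ω := mul_nonneg hc (sum_nonneg hω)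
  rw [norm_of_nonneg (exp_pos _).le, exp_le_exp]
  nlinarith [mul_le_mul_of_nonneg_left hS ht]

lemma integral_exp_sum_sub_sum_condExp_le_one
    (hadapt : ∀ n, 1 ≤ n → StronglyMeasurable[ℱ n] (ξ n))
    (hξ : ∀ n, 1 ≤ n → ∀ ω, ξ n ω ∈ Set.Icc (0 : ℝ) 1) {t : ℝ} (ht : 0 ≤ t) (n : ℕ) :
    ∫ ω, exp (t * ∑ i ∈ Icc 1 n, ξ i ω
      - (exp t - 1) * ∑ i ∈ Icc 1 n, μ[ξ i|ℱ (i - 1)] ω) ∂μ ≤ 1 := by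
  have hc : 0 ≤ exp t - 1 := by linarith [one_le_exp ht]
  induction n with
  | zero => simp
  | succ n ih =>
    set f : Ω → ℝ := fun ω => exp (t * ∑ i ∈ Icc 1 n, ξ i ω
      - (exp t - 1) * ∑ i ∈ Icc 1 (n + 1), μ[ξ i|ℱ (i - 1)] ω)
    have hf : StronglyMeasurable[ℱ n] f :=
      continuous_exp.comp_stronglyMeasurable <|
        ((Finset.stronglyMeasurable_fun_sum _ fun i hi =>
          (hadapt i (mem_Icc.1 hi).1).mono (ℱ.mono (mem_Icc.1 hi).2)).const_mul t).sub
        ((Finset.stronglyMeasurable_fun_sum _ fun i hi =>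
          stronglyMeasurable_condExp.mono (ℱ.mono (by grind))).const_mul _)
    have h_next : ∀ ω, f ω * exp (t * ξ (n + 1) ω) = exp (t * ∑ i ∈ Icc 1 (n + 1), ξ i ω
        - (exp t - 1) * ∑ i ∈ Icc 1 (n + 1), μ[ξ i|ℱ (i - 1)] ω) := fun ω => by
      rw [← exp_add, sum_Icc_succ_top (by omega : 1 ≤ n + 1) fun i => ξ i ω]
      ring_nf
    have h_prev : ∀ ω, f ω * exp ((exp t - 1) * μ[ξ (n + 1)|ℱ n] ω) = exp (t * ∑ i ∈ Icc 1 n,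
        ξ i ω - (exp t - 1) * ∑ i ∈ Icc 1 n, μ[ξ i|ℱ (i - 1)] ω) := fun ω => by
      rw [← exp_add, sum_Icc_succ_top (by omega : 1 ≤ n + 1), Nat.add_sub_cancel]
      ring_nf
    calc _ = ∫ ω, f ω * exp (t * ξ (n + 1) ω) ∂μ := by simp_rw [h_next]
      _ ≤ ∫ ω, f ω * exp ((exp t - 1) * μ[ξ (n + 1)|ℱ n] ω) ∂μ :=
        integral_mul_exp_le_integral_mul_exp_condExp (ℱ.le n) hf
          (.of_forall fun ω => (exp_pos _).le)
          (integrable_exp_sum_sub_sum_condExp hadapt hξ ht hc n (n + 1))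
          ((hadapt _ (by omega)).mono (ℱ.le _)).aestronglyMeasurable
          (.of_forall (hξ _ (by omega))) t
          (by simpa only [h_prev] using integrable_exp_sum_sub_sum_condExp hadapt hξ ht hc n n)
      _ = _ := by simp_rw [h_prev]
      _ ≤ 1 := ih

lemma measureReal_sum_ge_le_exp_of_sum_condExp_le
    (hadapt : ∀ n, 1 ≤ n → StronglyMeasurable[ℱ n] (ξ n))
    (hξ : ∀ n, 1 ≤ n → ∀ ω, ξ n ω ∈ Set.Icc (0 : ℝ) 1) {t : ℝ} (ht : 0 ≤ t) (N : ℕ)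
    (a b : ℝ) (hb : ∀ᵐ ω ∂μ, ∑ i ∈ Icc 1 N, μ[ξ i|ℱ (i - 1)] ω ≤ b) :
    μ.real {ω | a ≤ ∑ i ∈ Icc 1 N, ξ i ω} ≤ exp (-(t * a - (exp t - 1) * b)) := by
  have hc : 0 ≤ exp t - 1 := by linarith [one_le_exp ht]
  set W : Ω → ℝ := fun ω => exp (t * ∑ i ∈ Icc 1 N, ξ i ω
    - (exp t - 1) * ∑ i ∈ Icc 1 N, μ[ξ i|ℱ (i - 1)] ω)
  have h_sub : μ {ω | a ≤ ∑ i ∈ Icc 1 N, ξ i ω} ≤ μ {ω | exp (t * a - (exp t - 1) * b) ≤ W ω} := by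
    refine measure_mono_ae ?_
    filter_upwards [hb] with ω hω (hmem : a ≤ _)
    show _ ≤ exp _
    rw [exp_le_exp]
    nlinarith [mul_le_mul_of_nonneg_left hmem ht, mul_le_mul_of_nonneg_left hω hc]
  have h_markov := mul_meas_ge_le_integral_of_nonneg (.of_forall fun ω => (exp_pos _).le)
    (integrable_exp_sum_sub_sum_condExp (μ := μ) hadapt hξ ht hc N N)
    (exp (t * a - (exp t - 1) * b))
  rw [exp_neg, ← one_div, le_div_iff₀' (exp_pos _)]
  calc _ ≤ exp (t * a - (exp t - 1) * b) * μ.real {ω | exp (t * a - (exp t - 1) * b) ≤ W ω} :=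
        mul_le_mul_of_nonneg_left (ENNReal.toReal_mono (measure_ne_top _ _) h_sub)
          (exp_pos _).le
    _ ≤ 1 := h_markov.trans (integral_exp_sum_sub_sum_condExp_le_one hadapt hξ ht N)

end ExponentialSupermartingale

theorem statement2_general {Ω : Type*} {m0 : MeasurableSpace Ω} {μ : Measure Ω}
    [IsProbabilityMeasure μ] (ℱ : Filtration ℕ m0)
    (ξ θ : ℕ → Ω → ℝ)
    (hadapt : ∀ n, 1 ≤ n → StronglyMeasurable[ℱ n] (ξ n))
    (hval : ∀ n, 1 ≤ n → ∀ ω, ξ n ω = 0 ∨ ξ n ω = 1)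
    (hθ : ∀ n, 1 ≤ n → θ n = μ[ξ n|ℱ (n - 1)])
    (δ : ℝ) (hδ : 0 < δ) (N : ℕ) (μ₀ : ℝ) (hμ₀ : 0 < μ₀)
    (hbound : ∀ᵐ ω ∂μ, ∑ i ∈ Finset.Icc 1 N, θ i ω ≤ μ₀) :
    (μ {ω | ∃ n ∈ Finset.Icc 1 N, (1 + δ) * μ₀ ≤ ∑ i ∈ Finset.Icc 1 n, ξ i ω}).toReal
      ≤ Real.exp (-(δ ^ 2 / (2 + δ)) * μ₀) := by
  have hξ : ∀ n, 1 ≤ n → ∀ ω, ξ n ω ∈ Set.Icc (0 : ℝ) 1 := fun n hn ω => by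
    rcases hval n hn ω with h | h <;> simp [h]
  have hbound' : ∀ᵐ ω ∂μ, ∑ i ∈ Icc 1 N, μ[ξ i|ℱ (i - 1)] ω ≤ μ₀ := by
    filter_upwards [hbound] with ω hω
    rwa [sum_congr rfl fun i hi => congrFun (hθ i (mem_Icc.1 hi).1) ω] at hω
  have h_max : {ω | ∃ n ∈ Icc 1 N, (1 + δ) * μ₀ ≤ ∑ i ∈ Icc 1 n, ξ i ω}
      ⊆ {ω | (1 + δ) * μ₀ ≤ ∑ i ∈ Icc 1 N, ξ i ω} := by
    rintro ω ⟨n, hn, h⟩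
    exact h.trans (sum_le_sum_of_subset_of_nonneg (Icc_subset_Icc_right (mem_Icc.1 hn).2)
      fun i hi _ => (hξ i (mem_Icc.1 hi).1 ω).1)
  have h_tail := measureReal_sum_ge_le_exp_of_sum_condExp_le hadapt hξ
    (log_nonneg (by linarith : 1 ≤ 1 + δ)) N ((1 + δ) * μ₀) μ₀ hbound'
  rw [exp_log (by linarith)] at h_tail
  refine (measureReal_mono h_max).trans (h_tail.trans (exp_le_exp.2 ?_))
  nlinarith [sq_div_two_add_le_one_add_mul_log_one_add_sub hδ.le]

/-- maximal form of the martingale multiplicative Chernoff bound: in the setting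
of the martingale multiplicative Chernoff bound,
`P(∃ n ∈ {1,…,N} : ∑_{i=1}^n ξ i ≥ (1+δ) μ₀) ≤ exp(-(δ²/(2+δ)) μ₀)`. -/
theorem statement2 {Ω : Type*} {m0 : MeasurableSpace Ω} {μ : Measure Ω}
    [IsProbabilityMeasure μ] (ℱ : Filtration ℕ m0)
    (ξ θ : ℕ → Ω → ℝ)
    (hadapt : ∀ n, 1 ≤ n → StronglyMeasurable[ℱ n] (ξ n))
    (hval : ∀ n, 1 ≤ n → ∀ ω, ξ n ω = 0 ∨ ξ n ω = 1)
    (hθ : ∀ n, 1 ≤ n → θ n = μ[ξ n|ℱ (n - 1)])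
    (δ : ℝ) (hδ : 0 < δ) (N : ℕ) (hN : 1 ≤ N) (μ₀ : ℝ) (hμ₀ : 0 < μ₀)
    (hbound : ∀ᵐ ω ∂μ, ∑ i ∈ Finset.Icc 1 N, θ i ω ≤ μ₀) :
    (μ {ω | ∃ n ∈ Finset.Icc 1 N, (1 + δ) * μ₀ ≤ ∑ i ∈ Finset.Icc 1 n, ξ i ω}).toReal
      ≤ Real.exp (-(δ ^ 2 / (2 + δ)) * μ₀) :=
  statement2_general ℱ ξ θ hadapt hval hθ δ hδ N μ₀ hμ₀ hbound
end

section
/- Let $\sigma > 1$ and $p \in (0,1)$, and let $z \in \mathbb{R}$ satisfy $\Phi(z) = p/2$ (so $z < 0$), where $\Phi$ is the cumulative distribution function of $N(0,1)$. Set $l := \frac{1}{\sigma}\exp\left(\frac{1 - 1/\sigma^2}{2} z^2\right)$. Then $l \ge 1/\sigma$ and the standard Gaussian measure of the set $\left\{x \in \mathbb{R} : \frac{1}{\sigma}\exp\left((1 - 1/\sigma^2)x^2/2\right) \ge l\right\}$ equals $p$. (Consequently the canonical asymptotically optimal betting function for the change $N(0,1) \to N(0,\sigma^2)$ with $\sigma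 > 1$ is $f(p) = \frac{1}{\sigma}\exp\left(\frac{1-1/\sigma^2}{2}(\Phi^{-1}(p/2))^2\right)$.) -/
open MeasureTheory ProbabilityTheory

lemma gauss_map_neg : (gaussianReal 0 1).map (fun x : ℝ => -x) = gaussianReal 0 1 := by
  have h := gaussianReal_map_const_mul (μ := 0) (v := 1) (-1)
  have : (fun x : ℝ => -1 * x) = (fun x : ℝ => -x) := by funext x; ring
  rw [this] at h
  rw [h]
  norm_num

lemma gauss_Ici (z : ℝ) : (gaussianReal 0 1) (Set.Ici (-z)) = (gaussianReal 0 1) (Set.Iic z) := by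
  have h := gauss_map_neg
  have : (gaussianReal 0 1).map (fun x : ℝ => -x) (Set.Iic z) = (gaussianReal 0 1) (Set.Iic z) := by
    rw [h]
  rw [Measure.map_apply (by fun_prop) measurableSet_Iic] at this
  have hpre : (fun x : ℝ => -x) ⁻¹' Set.Iic z = Set.Ici (-z) := by
    ext x; simp [neg_le]
  rwa [hpre] at this

lemma gauss_half : ((gaussianReal 0 1) (Set.Iic (0:ℝ))).toReal = 1/2 := by
  have hzero : (gaussianReal 0 1) {(0:ℝ)} = 0 := by
    refine gaussianReal_absolutelyContinuous 0 one_ne_zero ?_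
    simp
  have hIci : (gaussianReal 0 1) (Set.Ici (0:ℝ)) = (gaussianReal 0 1) (Set.Iic (0:ℝ)) := by
    simpa using gauss_Ici 0
  have hsplit : (gaussianReal 0 1) (Set.Iic (0:ℝ)) + (gaussianReal 0 1) (Set.Ioi (0:ℝ)) = 1 := by
    rw [← measure_union (by simp [Set.disjoint_left]) measurableSet_Ioi]
    simp [Set.Iic_union_Ioi]
  have hIoi : (gaussianReal 0 1) (Set.Ioi (0:ℝ)) = (gaussianReal 0 1) (Set.Iic (0:ℝ)) := by
    rw [← hIci]
    have : Set.Ici (0:ℝ) = Set.Ioi 0 ∪ {0} := by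
      ext x; simp [le_iff_lt_or_eq, or_comm, eq_comm]
    rw [this, measure_union (by simp) (by simp), hzero, add_zero]
  rw [hIoi] at hsplit
  have hfin : (gaussianReal 0 1) (Set.Iic (0:ℝ)) ≠ ⊤ := measure_ne_top _ _
  have := congrArg ENNReal.toReal hsplit
  rw [ENNReal.toReal_add hfin hfin] at this
  simp at this
  linarith

/-- For `σ > 1`, `p ∈ (0,1)` and `z` with `Φ(z) = p/2`, setting
`l = (1/σ) exp((1 - 1/σ²) z²/2)`, we have `l ≥ 1/σ` and the standard Gaussian measure of
`{x : (1/σ) exp((1 - 1/σ²) x²/2) ≥ l}` equals `p`. (Hence the CAO betting function for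
`N(0,1) → N(0,σ²)`, `σ > 1`, is `f(p) = (1/σ) exp(((1-1/σ²)/2) (Φ⁻¹(p/2))²)`.) -/
theorem statement14 (σ p z : ℝ) (hσ : 1 < σ) (hp : p ∈ Set.Ioo (0 : ℝ) 1)
    (Φ : ℝ → ℝ) (hΦ : ∀ x, Φ x = ((gaussianReal 0 1) (Set.Iic x)).toReal)
    (hz : Φ z = p / 2)
    (l : ℝ) (hl : l = (1 / σ) * Real.exp ((1 - 1 / σ ^ 2) / 2 * z ^ 2)) :
    1 / σ ≤ l ∧
    ((gaussianReal 0 1)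
        {x : ℝ | l ≤ (1 / σ) * Real.exp ((1 - 1 / σ ^ 2) * x ^ 2 / 2)}).toReal = p := by
  have hσ0 : (0:ℝ) < σ := by linarith
  have hc : (0:ℝ) < 1 - 1 / σ ^ 2 := by
    have h1 : (1:ℝ) < σ ^ 2 := by nlinarith
    have : 1 / σ ^ 2 < 1 := by
      rw [div_lt_one (by positivity)]; exact h1
    linarith
  constructor
  · rw [hl]
    have : (1:ℝ) ≤ Real.exp ((1 - 1 / σ ^ 2) / 2 * z ^ 2) := by
      apply Real.one_le_exp
      have := sq_nonneg z
      nlinarith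
    nlinarith [one_div_pos.mpr hσ0]
  · -- z < 0
    have hzneg : z < 0 := by
      by_contra h
      push_neg at h
      have hmono : (gaussianReal 0 1) (Set.Iic (0:ℝ)) ≤ (gaussianReal 0 1) (Set.Iic z) :=
        measure_mono (Set.Iic_subset_Iic.mpr h)
      have := ENNReal.toReal_mono (measure_ne_top _ _) hmono
      rw [gauss_half, ← hΦ z, hz] at this
      linarith [hp.2]
    -- set equality
    have hset : {x : ℝ | l ≤ (1 / σ) * Real.exp ((1 - 1 / σ ^ 2) * x ^ 2 / 2)}
        = Set.Iic z ∪ Set.Ici (-z) := by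
      ext x
      simp only [Set.mem_setOf_eq, Set.mem_union, Set.mem_Iic, Set.mem_Ici, hl]
      rw [mul_le_mul_iff_right₀ (by positivity), Real.exp_le_exp]
      constructor
      · intro h
        have hzx : z ^ 2 ≤ x ^ 2 := by nlinarith
        rcases le_or_gt 0 x with hx | hx
        · right; nlinarith
        · left; nlinarith
      · intro h
        have : z ^ 2 ≤ x ^ 2 := by
          rcases h with h | h
          · nlinarith
          · nlinarith
        nlinarith
    rw [hset, measure_union ?_ measurableSet_Ici,
      ENNReal.toReal_add (measure_ne_top _ _) (measure_ne_top _ _), gauss_Ici]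
    · have hΦz : ((gaussianReal 0 1) (Set.Iic z)).toReal = p / 2 := by rw [← hΦ z, hz]
      rw [hΦz]; ring
    · rw [Set.disjoint_left]
      intro x hx hx'
      simp only [Set.mem_Iic, Set.mem_Ici] at hx hx'
      linarith
end

section
/- Let $\sigma \in (0,1)$ and $p \in (0,1)$, and let $z \in \mathbb{R}$ satisfy $\Phi(z) = (1-p)/2$, where $\Phi$ is the cumulative distribution function of $N(0,1)$. Set $l := \frac{1}{\sigma}\exp\left(\frac{1 - 1/\sigma^2}{2} z^2\right)$. Then $l \le 1/\sigma$ and the standard Gaussian measure of the set $\left\{x \in \mathbb{R} : \frac{1}{\sigma}\exp\left((1 - 1/\sigma^2)x^2/2\right) \ge l\right\}$ equals $p$. (Consequently the canonical asymptotically optimal betting function for the change $N(0,1) \to N(0,\sigma^2)$ with $\sigma < 1$ is $f(p) = \frac{1}{\sigma}\exp\left(\frac{1-1/\sigma^2}{2}(\Phi^{-1}((1-p)/2))^2\right)$.) -/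
open MeasureTheory ProbabilityTheory

lemma gauss_singleton (a : ℝ) : (gaussianReal 0 1) {a} = 0 :=
  gaussianReal_absolutelyContinuous 0 one_ne_zero (measure_singleton a)

lemma gauss_neg (a : ℝ) : (gaussianReal 0 1) (Set.Iic (-a)) = (gaussianReal 0 1) (Set.Ici a) := by
  have h := gaussianReal_map_const_mul (μ := 0) (v := 1) (-1)
  have h1 : (⟨(-1 : ℝ)^2, sq_nonneg _⟩ : NNReal) * 1 = 1 := by
    ext; norm_num
  replace h : Measure.map (fun x : ℝ => -1 * x) (gaussianReal 0 1) = gaussianReal 0 1 := by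
    rw [h, mul_zero]; congr 1
  have hm : Measurable (fun x : ℝ => -1 * x) := by fun_prop
  calc (gaussianReal 0 1) (Set.Iic (-a))
      = ((gaussianReal 0 1).map (fun x : ℝ => -1 * x)) (Set.Iic (-a)) := by rw [h]
    _ = (gaussianReal 0 1) ((fun x : ℝ => -1 * x) ⁻¹' Set.Iic (-a)) := by
        rw [Measure.map_apply hm measurableSet_Iic]
    _ = (gaussianReal 0 1) (Set.Ici a) := by
        congr 1
        ext x
        simp only [Set.mem_preimage, Set.mem_Iic, Set.mem_Ici]
        constructor <;> intro hx <;> linarith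

lemma gauss_Ici_add (a : ℝ) :
    ((gaussianReal 0 1) (Set.Iic a)).toReal + ((gaussianReal 0 1) (Set.Ici a)).toReal = 1 := by
  have hIci : (gaussianReal 0 1) (Set.Ici a) = (gaussianReal 0 1) (Set.Ioi a) := by
    refine le_antisymm ?_ (measure_mono Set.Ioi_subset_Ici_self)
    have : Set.Ici a ⊆ {a} ∪ Set.Ioi a := by
      intro x hx
      rcases eq_or_lt_of_le (Set.mem_Ici.mp hx) with h | h
      · exact Or.inl (by simp [← h])
      · exact Or.inr h
    calc (gaussianReal 0 1) (Set.Ici a) ≤ (gaussianReal 0 1) ({a} ∪ Set.Ioi a) := measure_mono this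
      _ ≤ (gaussianReal 0 1) {a} + (gaussianReal 0 1) (Set.Ioi a) := measure_union_le _ _
      _ = (gaussianReal 0 1) (Set.Ioi a) := by rw [gauss_singleton]; simp
  have hu : (gaussianReal 0 1) (Set.Iic a) + (gaussianReal 0 1) (Set.Ioi a) = 1 := by
    rw [← measure_union (Set.Iic_disjoint_Ioi le_rfl) measurableSet_Ioi, Set.Iic_union_Ioi]
    simp
  rw [hIci, ← ENNReal.toReal_add (measure_ne_top _ _) (measure_ne_top _ _), hu]
  simp

/-- For `σ ∈ (0,1)`, `p ∈ (0,1)` and `z` with `Φ(z) = (1-p)/2`, setting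
`l = (1/σ) exp((1 - 1/σ²) z²/2)`, we have `l ≤ 1/σ` and the standard Gaussian measure of
`{x : (1/σ) exp((1 - 1/σ²) x²/2) ≥ l}` equals `p`. (Hence the CAO betting function for
`N(0,1) → N(0,σ²)`, `σ < 1`, is `f(p) = (1/σ) exp(((1-1/σ²)/2) (Φ⁻¹((1-p)/2))²)`.) -/
theorem statement15 (σ p z : ℝ) (hσ : σ ∈ Set.Ioo (0 : ℝ) 1) (hp : p ∈ Set.Ioo (0 : ℝ) 1)
    (Φ : ℝ → ℝ) (hΦ : ∀ x, Φ x = ((gaussianReal 0 1) (Set.Iic x)).toReal)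
    (hz : Φ z = (1 - p) / 2)
    (l : ℝ) (hl : l = (1 / σ) * Real.exp ((1 - 1 / σ ^ 2) / 2 * z ^ 2)) :
    l ≤ 1 / σ ∧
    ((gaussianReal 0 1)
        {x : ℝ | l ≤ (1 / σ) * Real.exp ((1 - 1 / σ ^ 2) * x ^ 2 / 2)}).toReal = p := by
  obtain ⟨hσ0, hσ1⟩ := hσ
  obtain ⟨hp0, hp1⟩ := hp
  have hσinv : (0 : ℝ) < 1 / σ := by positivity
  have hc : 1 - 1 / σ ^ 2 < 0 := by
    have h1 : σ ^ 2 < 1 := by nlinarith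
    have : (1 : ℝ) < 1 / σ ^ 2 := (one_lt_one_div (by positivity) h1)
    linarith
  -- part 1
  have part1 : l ≤ 1 / σ := by
    rw [hl]
    have hexp : Real.exp ((1 - 1 / σ ^ 2) / 2 * z ^ 2) ≤ 1 := by
      rw [Real.exp_le_one_iff]
      nlinarith [sq_nonneg z]
    nlinarith [Real.exp_pos ((1 - 1 / σ ^ 2) / 2 * z ^ 2)]
  refine ⟨part1, ?_⟩
  -- z ≤ 0
  have hz0 : z ≤ 0 := by
    by_contra h
    push_neg at h
    have hmono : Φ 0 ≤ Φ z := by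
      rw [hΦ 0, hΦ z]
      exact ENNReal.toReal_mono (measure_ne_top _ _)
        (measure_mono (Set.Iic_subset_Iic.mpr h.le))
    have h0 : Φ 0 = 1 / 2 := by
      have := gauss_Ici_add 0
      have hneg := gauss_neg 0
      rw [neg_zero] at hneg
      rw [hΦ 0]
      rw [hneg] at this ⊢
      linarith
    rw [hz, h0] at hmono
    linarith
  -- set equality
  have hset : {x : ℝ | l ≤ (1 / σ) * Real.exp ((1 - 1 / σ ^ 2) * x ^ 2 / 2)} =
      Set.Icc z (-z) := by
    ext x
    simp only [Set.mem_setOf_eq, Set.mem_Icc, hl]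
    rw [mul_le_mul_iff_right₀ hσinv, Real.exp_le_exp]
    constructor
    · intro h
      have hx2 : x ^ 2 ≤ (-z) ^ 2 := by nlinarith
      have := abs_le_of_sq_le_sq' hx2 (by linarith : 0 ≤ -z)
      constructor <;> [linarith [this.1]; exact this.2]
    · intro ⟨h1, h2⟩
      have hx2 : x ^ 2 ≤ z ^ 2 := by
        have := sq_le_sq' (by linarith) h2
        calc x ^ 2 ≤ (-z) ^ 2 := this
          _ = z ^ 2 := by ring
      nlinarith
  rw [hset]
  -- measure of Icc z (-z)
  have hIcc : (gaussianReal 0 1) (Set.Icc z (-z)) = (gaussianReal 0 1) (Set.Ioc z (-z)) := by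
    refine le_antisymm ?_ (measure_mono Set.Ioc_subset_Icc_self)
    rw [← Set.Ioc_insert_left (by linarith : z ≤ -z), Set.insert_eq]
    calc (gaussianReal 0 1) ({z} ∪ Set.Ioc z (-z))
        ≤ (gaussianReal 0 1) {z} + (gaussianReal 0 1) (Set.Ioc z (-z)) := measure_union_le _ _
      _ = (gaussianReal 0 1) (Set.Ioc z (-z)) := by rw [gauss_singleton]; simp
  have hu : (gaussianReal 0 1) (Set.Iic z) + (gaussianReal 0 1) (Set.Ioc z (-z)) =
      (gaussianReal 0 1) (Set.Iic (-z)) := by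
    rw [← measure_union (Set.Iic_disjoint_Ioc le_rfl) measurableSet_Ioc,
      Set.Iic_union_Ioc_eq_Iic (by linarith : z ≤ -z)]
  have hur : Φ z + ((gaussianReal 0 1) (Set.Ioc z (-z))).toReal =
      ((gaussianReal 0 1) (Set.Iic (-z))).toReal := by
    rw [hΦ z, ← ENNReal.toReal_add (measure_ne_top _ _) (measure_ne_top _ _), hu]
  have hsym : ((gaussianReal 0 1) (Set.Iic (-z))).toReal = 1 - Φ z := by
    rw [gauss_neg z, hΦ z]
    linarith [gauss_Ici_add z]
  rw [hIcc]
  rw [hz] at hur hsym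
  linarith
end
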